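/- arXiv:math/0005159 — 2 statements merged into one kernel-verified Lean document; each statement's English description precedes it below -/
import Mathlib

section
/- Let L be a CSL on a separable Hilbert space H and let x ∈ H. Suppose the projection P onto the closed invariant subspace [Alg L · x] is generated by a minimal finite family of atoms A₁,…,Aₙ of L (P = E(A₁,…,Aₙ), and no proper subfamily generates P). Then Aₖx ≠ 0 for each k, and for every y ∈ PH there exists T ∈ Alg L with Tx = y; that is, {Alg L · x} = [Alg L · x], so x is a closed vector. -/
/-!
Write the atom `Aₖ = Eₖ - Fₖ` with `Eₖ, Fₖ ∈ L`. An atom is either orthogonal to or contained in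
each member of `L`. By minimality some `G ∈ L` contains every `Aⱼ`, `j ≠ k`, but not `P`, so `Aₖ`
is orthogonal to `G`. If `Aₖ x = 0`, then `x`, which lies under `P ≤ G ∨ Eₖ`, also lies under
`G ∨ Fₖ`; that projection is then invariant for `Alg L` and dominates `P ≥ Aₖ`, which is impossible
since `Aₖ` is orthogonal to both `G` and `Fₖ`.

For the orbit, the join of the commuting projections `E(Aⱼ)` lies in `L` and has as range the
(algebraic, hence closed) sum of their ranges; it dominates `P`, so each `y ∈ PH` is `∑ cⱼ` with
`cⱼ ∈ E(Aⱼ)H`. By the same dichotomy the rank-one operators `z ↦ ⟪Aⱼ x, z⟫ cⱼ` lie in `Alg L`,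
and since `⟪Aⱼ x, x⟫ = ‖Aⱼ x‖² ≠ 0` a suitable combination of them maps `x` to `y`.
-/
noncomputable section

open scoped InnerProductSpace

variable {H : Type*} [NormedAddCommGroup H] [InnerProductSpace ℂ H] [CompleteSpace H]

/-- `P` is an orthogonal projection on `H`. -/
def IsOrthProj (P : H →L[ℂ] H) : Prop := IsSelfAdjoint P ∧ P ∘L P = P

/-- The usual order on orthogonal projections: `P ≤ Q` iff `Q P = P` (range containment). -/
def pLE (P Q : H →L[ℂ] H) : Prop := Q ∘L P = P

/-- An atom of the lattice `L`: a nonzero interval projection `E - F` (`E, F ∈ L`, `F ≤ E`)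
containing no interval projection other than `0` and itself. -/
def IsAtomOf (L : Set (H →L[ℂ] H)) (A : H →L[ℂ] H) : Prop :=
  A ≠ 0 ∧ (∃ E ∈ L, ∃ F ∈ L, pLE F E ∧ A = E - F) ∧
    ∀ E ∈ L, ∀ F ∈ L, pLE F E → pLE (E - F) A → E - F = 0 ∨ E - F = A

/-- `L` is a commutative subspace lattice (CSL): a strongly closed complete lattice of
mutually commuting orthogonal projections containing `0` and `I`.  Completeness is expressed
by the existence, for every subset, of a member of `L` realizing the honest infimum
(intersection of ranges) and the honest supremum (closed span of ranges). -/
def IsCSL (L : Set (H →L[ℂ] H)) : Prop :=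
  (∀ P ∈ L, IsOrthProj P) ∧
  (∀ P ∈ L, ∀ Q ∈ L, P ∘L Q = Q ∘L P) ∧
  (0 : H →L[ℂ] H) ∈ L ∧ (1 : H →L[ℂ] H) ∈ L ∧
  (∀ S ⊆ L, ∃ P ∈ L, (∀ Q ∈ S, pLE P Q) ∧
      LinearMap.range (P : H →ₗ[ℂ] H) = ⨅ Q ∈ S, LinearMap.range (Q : H →ₗ[ℂ] H)) ∧
  (∀ S ⊆ L, ∃ P ∈ L, (∀ Q ∈ S, pLE Q P) ∧
      LinearMap.range (P : H →ₗ[ℂ] H) = (⨆ Q ∈ S, LinearMap.range (Q : H →ₗ[ℂ] H)).topologicalClosure)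

/-- `Alg L`: the algebra of operators leaving every projection of `L` invariant. -/
def AlgL (L : Set (H →L[ℂ] H)) : Set (H →L[ℂ] H) :=
  {T | ∀ P ∈ L, (1 - P) ∘L (T ∘L P) = 0}

/-- The (not necessarily closed) orbit `{Alg L · x}` of a vector `x`. -/
def orbit (L : Set (H →L[ℂ] H)) (x : H) : Set H :=
  {y | ∃ T ∈ AlgL L, T x = y}

/-- `P` is hyperatomic in `L`: `P = E(A₁, …, Aₖ)`, the smallest projection of `L`
dominating finitely many atoms `A₁, …, Aₖ` of `L`. -/
def HyperatomicIn (L : Set (H →L[ℂ] H)) (P : H →L[ℂ] H) : Prop :=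
  ∃ (k : ℕ) (A : Fin k → H →L[ℂ] H), (∀ j, IsAtomOf L (A j)) ∧
    (∀ j, pLE (A j) P) ∧ ∀ F ∈ L, (∀ j, pLE (A j) F) → pLE P F

open ContinuousLinearMap InnerProductSpace

namespace ContinuousLinearMap.IsIdempotentElem

variable {R M : Type*} [Ring R] [TopologicalSpace M] [AddCommGroup M] [Module R M]
  {p q : M →L[R] M}

lemma mem_range_iff (hp : IsIdempotentElem p) {z : M} : z ∈ p.range ↔ p z = z :=
  LinearMap.IsIdempotentElem.mem_range_iff (toLinearMap hp)

lemma comp_eq_right_iff (hq : IsIdempotentElem q) : q ∘L p = p ↔ p.range ≤ q.range := by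
  rw [← coe_inj, toLinearMap_comp]
  exact LinearMap.IsIdempotentElem.comp_eq_right_iff (toLinearMap hq) _

variable [IsTopologicalAddGroup M]

lemma range_mul_of_commute (hpq : Commute p q) (hp : IsIdempotentElem p)
    (hq : IsIdempotentElem q) : (p * q).range = p.range ⊓ q.range := by
  ext z
  rw [Submodule.mem_inf, mem_range_iff (hp.mul_of_commute hpq hq), mem_range_iff hp,
    mem_range_iff hq, mul_apply_eq_comp]
  refine ⟨fun h => ⟨?_, ?_⟩, fun ⟨hpz, hqz⟩ => by rw [hqz, hpz]⟩
  · rw [← h, ← mul_apply_eq_comp p p, hp.eq]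
  · rw [← h, ← mul_apply_eq_comp q p, ← hpq.eq, mul_apply_eq_comp, ← mul_apply_eq_comp q q, hq.eq]

lemma range_add_sub_mul_of_commute (hpq : Commute p q) (hp : IsIdempotentElem p)
    (hq : IsIdempotentElem q) : (p + q - p * q).range = p.range ⊔ q.range := by
  have hpq' := hp.add_sub_mul_of_commute hpq hq
  refine le_antisymm ?_ (sup_le ?_ ?_)
  · rintro _ ⟨v, rfl⟩
    have : (p + q - p * q) v = p v + q (v - p v) := by
      rw [map_sub, ← mul_apply_eq_comp q p, ← hpq.eq]
      simp only [sub_apply, add_apply, mul_apply_eq_comp]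
      abel
    change (p + q - p * q) v ∈ _
    rw [this]
    exact Submodule.add_mem_sup (LinearMap.mem_range_self _ _) (LinearMap.mem_range_self _ _)
  · rw [← comp_eq_right_iff hpq', ← mul_def, sub_mul, add_mul, hpq.eq, mul_assoc, hp.eq]
    abel
  · rw [← comp_eq_right_iff hpq', ← mul_def, sub_mul, add_mul, mul_assoc, hq.eq]
    abel

end ContinuousLinearMap.IsIdempotentElem

section

omit [CompleteSpace H]

lemma pLE_iff_range_le {P Q : H →L[ℂ] H} (hQ : IsIdempotentElem Q) :
    pLE P Q ↔ P.range ≤ Q.range :=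
  IsIdempotentElem.comp_eq_right_iff hQ

lemma pLE.trans {P Q R : H →L[ℂ] H} (hPQ : pLE P Q) (hQR : pLE Q R) : pLE P R := by
  unfold pLE at *
  rw [← hPQ, ← comp_assoc, hQR]

lemma pLE.apply_eq {P Q : H →L[ℂ] H} (hPQ : pLE P Q) {x : H} (hx : P x = x) : Q x = x := by
  rw [← hx, ← comp_apply, hPQ]

lemma sum_mem_algL {L : Set (H →L[ℂ] H)} {ι : Type*} (s : Finset ι) {T : ι → H →L[ℂ] H}
    (hT : ∀ i ∈ s, T i ∈ AlgL L) : ∑ i ∈ s, T i ∈ AlgL L :=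
  Finset.sum_induction _ (· ∈ AlgL L)
    (fun S₁ S₂ h₁ h₂ P hP => by rw [add_comp, comp_add, h₁ P hP, h₂ P hP, add_zero])
    (fun P _ => by rw [zero_comp, comp_zero]) hT

lemma orbit_subset_range {L : Set (H →L[ℂ] H)} {Q : H →L[ℂ] H} (hQ : Q ∈ L) {x : H}
    (hx : Q x = x) : orbit L x ⊆ Q.range := by
  rintro _ ⟨T, hT, rfl⟩
  have hTQ : T * Q = Q * (T * Q) := by
    have : (1 - Q) * (T * Q) = 0 := hT Q hQ
    rwa [sub_mul, one_mul, sub_eq_zero] at this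
  refine ⟨T (Q x), ?_⟩
  change Q (T (Q x)) = T x
  rw [← mul_apply_eq_comp T, ← mul_apply_eq_comp, ← hTQ, mul_apply_eq_comp, hx]

end

lemma IsStarProjection.inner_apply_self {A : H →L[ℂ] H} (hA : IsStarProjection A) (x : H) :
    ⟪A x, x⟫_ℂ = ⟪A x, A x⟫_ℂ := by
  rw [← adjoint_inner_left, hA.isSelfAdjoint.adjoint_eq, ← mul_apply_eq_comp,
    hA.isIdempotentElem.eq]

namespace IsCSL

variable {L : Set (H →L[ℂ] H)} (hL : IsCSL L) {P Q : H →L[ℂ] H}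
include hL

lemma isStarProjection (hP : P ∈ L) : IsStarProjection P :=
  ⟨(hL.1 P hP).2, (hL.1 P hP).1⟩

lemma isIdempotentElem (hP : P ∈ L) : IsIdempotentElem P :=
  (hL.isStarProjection hP).isIdempotentElem

lemma commute (hP : P ∈ L) (hQ : Q ∈ L) : Commute P Q :=
  hL.2.1 P hP Q hQ

lemma range_add_sub_mul (hP : P ∈ L) (hQ : Q ∈ L) :
    (P + Q - P * Q).range = P.range ⊔ Q.range :=
  IsIdempotentElem.range_add_sub_mul_of_commute (hL.commute hP hQ) (hL.isIdempotentElem hP)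
    (hL.isIdempotentElem hQ)

lemma mul_mem (hP : P ∈ L) (hQ : Q ∈ L) : P * Q ∈ L := by
  obtain ⟨R, hR, -, hRrange⟩ := hL.2.2.2.2.1 {P, Q} (Set.insert_subset hP (by simpa using hQ))
  have hPQ := (hL.isStarProjection hP).mul (hL.isStarProjection hQ) (hL.commute hP hQ)
  rwa [hPQ.ext (hL.isStarProjection hR) <| by
    rw [hRrange, iInf_pair, IsIdempotentElem.range_mul_of_commute (hL.commute hP hQ)
      (hL.isIdempotentElem hP) (hL.isIdempotentElem hQ)]]

lemma add_sub_mul_mem (hP : P ∈ L) (hQ : Q ∈ L) : P + Q - P * Q ∈ L := by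
  obtain ⟨R, hR, -, hRrange⟩ := hL.2.2.2.2.2 {P, Q} (Set.insert_subset hP (by simpa using hQ))
  have hPQ := (hL.isStarProjection hP).add_sub_mul_of_commute (hL.commute hP hQ)
    (hL.isStarProjection hQ)
  rwa [hPQ.ext (hL.isStarProjection hR) <| by
    rw [hRrange, iSup_pair, ← hL.range_add_sub_mul hP hQ,
      (IsIdempotentElem.isClosed_range hPQ.isIdempotentElem).submodule_topologicalClosure_eq]]

lemma pLE_add_sub_mul_left (hP : P ∈ L) (hQ : Q ∈ L) : pLE P (P + Q - P * Q) := by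
  rw [pLE_iff_range_le (hL.isIdempotentElem (hL.add_sub_mul_mem hP hQ)),
    hL.range_add_sub_mul hP hQ]
  exact le_sup_left

lemma pLE_add_sub_mul_right (hP : P ∈ L) (hQ : Q ∈ L) : pLE Q (P + Q - P * Q) := by
  rw [pLE_iff_range_le (hL.isIdempotentElem (hL.add_sub_mul_mem hP hQ)),
    hL.range_add_sub_mul hP hQ]
  exact le_sup_right

lemma exists_range_eq_biSup {ι : Type*} (M : ι → H →L[ℂ] H) (hM : ∀ i, M i ∈ L)
    (s : Finset ι) : ∃ N ∈ L, N.range = ⨆ i ∈ s, (M i).range := by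
  classical
  induction s using Finset.induction_on with
  | empty => exact ⟨0, hL.2.2.1, by simp⟩
  | insert i s _ ih =>
    obtain ⟨N, hN, hNrange⟩ := ih
    refine ⟨M i + N - M i * N, hL.add_sub_mul_mem (hM i) hN, ?_⟩
    rw [Finset.iSup_insert, ← hNrange]
    exact hL.range_add_sub_mul (hM i) hN

lemma exists_least_pLE (A : H →L[ℂ] H) :
    ∃ M ∈ L, pLE A M ∧ ∀ Q ∈ L, pLE A Q → pLE M Q := by
  obtain ⟨M, hM, hMle, hMrange⟩ := hL.2.2.2.2.1 {Q | Q ∈ L ∧ pLE A Q} fun _ hQ => hQ.1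
  refine ⟨M, hM, ?_, fun Q hQ hAQ => hMle Q ⟨hQ, hAQ⟩⟩
  rw [pLE_iff_range_le (hL.isIdempotentElem hM), hMrange]
  exact le_iInf₂ fun Q ⟨hQ, hAQ⟩ =>
    (pLE_iff_range_le (hL.isIdempotentElem hQ)).1 hAQ

lemma one_mem_algL : 1 ∈ AlgL L := fun P hP => by
  change (1 - P) * (1 * P) = 0
  rw [one_mul, sub_mul, one_mul, (hL.isIdempotentElem hP).eq, sub_self]

lemma mem_orbit_self (x : H) : x ∈ orbit L x :=
  ⟨1, hL.one_mem_algL, rfl⟩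

lemma pLE_of_apply_eq_self {x : H} {P Q : H →L[ℂ] H}
    (hPrange : (P.range : Set H) = closure (orbit L x)) (hQ : Q ∈ L) (hx : Q x = x) :
    pLE P Q := by
  have hQidem := hL.isIdempotentElem hQ
  rw [pLE_iff_range_le hQidem, ← SetLike.coe_subset_coe, hPrange]
  exact closure_minimal (orbit_subset_range hQ hx) (IsIdempotentElem.isClosed_range hQidem)

end IsCSL

namespace IsAtomOf

variable {L : Set (H →L[ℂ] H)} (hL : IsCSL L) {A Q : H →L[ℂ] H} (hA : IsAtomOf L A)
include hL hA

lemma isStarProjection : IsStarProjection A := by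
  obtain ⟨-, ⟨E, hE, F, hF, hFE, rfl⟩, -⟩ := hA
  exact (hL.isStarProjection hF).sub_of_mul_eq_right (hL.isStarProjection hE) hFE

lemma commute (hQ : Q ∈ L) : Commute A Q := by
  obtain ⟨-, ⟨E, hE, F, hF, -, rfl⟩, -⟩ := hA
  exact (hL.commute hE hQ).sub_left (hL.commute hF hQ)

lemma mul_eq_zero_or_pLE (hQ : Q ∈ L) : A * Q = 0 ∨ pLE A Q := by
  have hAQ := hA.commute hL hQ
  have hAA := (hA.isStarProjection hL).isIdempotentElem
  obtain ⟨-, ⟨E, hE, F, hF, hFE, hEF⟩, hmin⟩ := hA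
  -- `A Q = E Q - F Q` is an interval of `L` below the atom `A`.
  have hAQ' : E * Q - F * Q = A * Q := by rw [hEF, sub_mul]
  refine (hmin (E * Q) (hL.mul_mem hE hQ) (F * Q) (hL.mul_mem hF hQ) ?_ ?_).imp
    (fun h => hAQ' ▸ h) (fun h => ?_)
  · change E * Q * (F * Q) = F * Q
    have hFE' : E * F = F := hFE
    rw [mul_assoc, ← mul_assoc Q, ← (hL.commute hF hQ).eq, mul_assoc,
      (hL.isIdempotentElem hQ).eq, ← mul_assoc, hFE']
  · change A * (E * Q - F * Q) = E * Q - F * Q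
    rw [hAQ', ← mul_assoc, hAA.eq]
  · change Q * A = A
    rw [← hAQ.eq, ← hAQ', h]

lemma rankOne_mem_algL {M : H →L[ℂ] H} (hM : ∀ Q ∈ L, pLE A Q → pLE M Q) {c u : H}
    (hc : M c = c) (hu : A u = u) : rankOne ℂ c u ∈ AlgL L := by
  intro Q hQ
  ext z
  simp only [comp_apply, rankOne_apply, sub_apply, one_apply_eq_self, zero_apply,
    map_smul]
  rcases hA.mul_eq_zero_or_pLE hL hQ with h | h
  · have hQu : Q u = 0 := by
      rw [← hu, ← mul_apply_eq_comp, ← (hA.commute hL hQ).eq, h, zero_apply]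
    rw [← adjoint_inner_left, (hL.isStarProjection hQ).isSelfAdjoint.adjoint_eq, hQu,
      inner_zero_left, zero_smul]
  · rw [(hM Q hQ h).apply_eq hc, sub_self, smul_zero]

end IsAtomOf

namespace IsCSL

variable {L : Set (H →L[ℂ] H)} (hL : IsCSL L)
include hL

lemma atom_apply_ne_zero {x : H} {P : H →L[ℂ] H}
    (hP : IsIdempotentElem P) (hPrange : (P.range : Set H) = closure (orbit L x))
    {ι : Type*} {A : ι → H →L[ℂ] H} (hatoms : ∀ j, IsAtomOf L (A j)) (hdom : ∀ j, pLE (A j) P)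
    (hgen : ∀ F ∈ L, (∀ j, pLE (A j) F) → pLE P F) {k : ι}
    (hk : ¬ ∀ F ∈ L, (∀ j ≠ k, pLE (A j) F) → pLE P F) : A k x ≠ 0 := by
  intro hAx
  push Not at hk
  obtain ⟨G, hG, hGdom, hPG⟩ := hk
  have hPG_of_pLE : pLE (A k) G → pLE P G := fun hAG => hgen G hG fun j => by
    by_cases hj : j = k
    · exact hj ▸ hAG
    · exact hGdom j hj
  have hAG : A k * G = 0 :=
    ((hatoms k).mul_eq_zero_or_pLE hL hG).resolve_right (mt hPG_of_pLE hPG)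
  obtain ⟨hA0, ⟨E, hE, F, hF, hFE, hAEF⟩, -⟩ := hatoms k
  have hxP : P x = x := (IsIdempotentElem.mem_range_iff hP).1 <| by
    rw [← SetLike.mem_coe, hPrange]; exact subset_closure (hL.mem_orbit_self x)
  have hPGE : pLE P (G + E - G * E) := hgen _ (hL.add_sub_mul_mem hG hE) fun j => by
    by_cases hj : j = k
    · subst hj
      have hAE : pLE (A j) E := by
        change E * A j = A j
        rw [hAEF, mul_sub, (hL.isIdempotentElem hE).eq, show E * F = F from hFE]
      exact hAE.trans (hL.pLE_add_sub_mul_right hG hE)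
    · exact (hGdom j hj).trans (hL.pLE_add_sub_mul_left hG hE)
  have hPGF : pLE P (G + F - G * F) := by
    refine hL.pLE_of_apply_eq_self hPrange (hL.add_sub_mul_mem hG hF) ?_
    have hEF : E x = F x := by rwa [hAEF, sub_apply, sub_eq_zero] at hAx
    have := hPGE.apply_eq hxP
    simpa only [sub_apply, add_apply, mul_apply_eq_comp, hEF] using this
  have hGA : G * A k = 0 := by rw [← ((hatoms k).commute hL hG).eq, hAG]
  have hFA : F * A k = 0 := by
    rw [hAEF, mul_sub, ← (hL.commute hE hF).eq, show E * F = F from hFE,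
      (hL.isIdempotentElem hF).eq, sub_self]
  apply hA0
  calc A k = (G + F - G * F) * A k := ((hdom k).trans hPGF).symm
    _ = G * A k + F * A k - G * (F * A k) := by noncomm_ring
    _ = 0 := by rw [hGA, hFA, mul_zero, add_zero, sub_zero]

lemma exists_mem_algL_apply_eq {x : H}
    {P : H →L[ℂ] H} {ι : Type*} [Fintype ι] {A : ι → H →L[ℂ] H}
    (hatoms : ∀ j, IsAtomOf L (A j)) (hAx : ∀ j, A j x ≠ 0)
    (hgen : ∀ F ∈ L, (∀ j, pLE (A j) F) → pLE P F) {y : H} (hy : P y = y) :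
    ∃ T ∈ AlgL L, T x = y := by
  choose M hM hAM hMmin using fun j => hL.exists_least_pLE (A j)
  obtain ⟨N, hN, hNrange⟩ := hL.exists_range_eq_biSup M hM Finset.univ
  have hPN : pLE P N := hgen N hN fun j => (hAM j).trans <| by
    rw [pLE_iff_range_le (hL.isIdempotentElem hN), hNrange]
    exact le_biSup (fun i => (M i).range) (Finset.mem_univ j)
  obtain ⟨c, hc⟩ := (Submodule.mem_iSup_finset_iff_exists_sum _ y).1 <| by
    rw [← hNrange]; exact ⟨y, hPN.apply_eq hy⟩
  have hcM : ∀ j, M j (c j) = c j := fun j =>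
    (IsIdempotentElem.mem_range_iff (hL.isIdempotentElem (hM j))).1 (c j).2
  refine ⟨∑ j, rankOne ℂ ((⟪A j x, x⟫_ℂ)⁻¹ • (c j : H)) (A j x),
    sum_mem_algL _ fun j _ => (hatoms j).rankOne_mem_algL hL (hMmin j) ?_ ?_, ?_⟩
  · rw [map_smul, hcM]
  · rw [← mul_apply_eq_comp, ((hatoms j).isStarProjection hL).isIdempotentElem.eq]
  · rw [sum_apply, ← hc]
    refine Finset.sum_congr rfl fun j _ => ?_
    have hinner : ⟪A j x, x⟫_ℂ ≠ 0 := by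
      rw [((hatoms j).isStarProjection hL).inner_apply_self]
      exact inner_self_ne_zero.2 (hAx j)
    rw [rankOne_apply, smul_smul, mul_inv_cancel₀ hinner, one_smul]

end IsCSL

theorem stmt7_general (L : Set (H →L[ℂ] H)) (hL : IsCSL L) (x : H)
    (P : H →L[ℂ] H) (hPproj : IsOrthProj P)
    (hPrange : (LinearMap.range (P : H →ₗ[ℂ] H) : Set H) = closure (orbit L x))
    (n : ℕ) (A : Fin n → H →L[ℂ] H) (hatoms : ∀ j, IsAtomOf L (A j))
    (hdom : ∀ j, pLE (A j) P)
    (hgen : ∀ F ∈ L, (∀ j, pLE (A j) F) → pLE P F)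
    (hmin : ∀ S : Finset (Fin n), S ≠ Finset.univ →
      ¬ (∀ F ∈ L, (∀ j ∈ S, pLE (A j) F) → pLE P F)) :
    (∀ k, A k x ≠ 0) ∧ (∀ y : H, P y = y → ∃ T ∈ AlgL L, T x = y) ∧
      IsClosed (orbit L x) := by
  have hPidem : IsIdempotentElem P := hPproj.2
  have hessential : ∀ k, ¬ ∀ F ∈ L, (∀ j ≠ k, pLE (A j) F) → pLE P F := fun k h =>
    hmin (Finset.univ.erase k) (fun he => Finset.notMem_erase k _ (he ▸ Finset.mem_univ k))
      fun F hF hFdom => h F hF fun j hj => hFdom j (Finset.mem_erase.2 ⟨hj, Finset.mem_univ j⟩)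
  have hAx : ∀ k, A k x ≠ 0 := fun k =>
    hL.atom_apply_ne_zero hPidem hPrange hatoms hdom hgen (hessential k)
  have hsurj : ∀ y : H, P y = y → ∃ T ∈ AlgL L, T x = y := fun y hy =>
    hL.exists_mem_algL_apply_eq hatoms hAx hgen hy
  have horbit : orbit L x = P.range :=
    (hPrange ▸ subset_closure).antisymm fun y hy =>
      hsurj y ((IsIdempotentElem.mem_range_iff hPidem).1 hy)
  exact ⟨hAx, hsurj, horbit ▸ IsIdempotentElem.isClosed_range hPidem⟩

/-- if the projection `P` onto `[Alg L · x]` is generated by a minimal finite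
family of atoms `A₁, …, Aₙ`, then each `Aₖ x ≠ 0`, every `y ∈ PH` is of the form `T x` with
`T ∈ Alg L`, and the orbit `{Alg L · x}` is closed (`x` is a closed vector). -/
theorem stmt7 (L : Set (H →L[ℂ] H)) (hL : IsCSL L) (x : H)
    (P : H →L[ℂ] H) (hPproj : IsOrthProj P) (hPL : P ∈ L)
    (hPrange : (LinearMap.range (P : H →ₗ[ℂ] H) : Set H) = closure (orbit L x))
    (n : ℕ) (A : Fin n → H →L[ℂ] H) (hatoms : ∀ j, IsAtomOf L (A j))
    (hdom : ∀ j, pLE (A j) P)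
    (hgen : ∀ F ∈ L, (∀ j, pLE (A j) F) → pLE P F)
    (hmin : ∀ S : Finset (Fin n), S ≠ Finset.univ →
      ¬ (∀ F ∈ L, (∀ j ∈ S, pLE (A j) F) → pLE P F)) :
    (∀ k, A k x ≠ 0) ∧ (∀ y : H, P y = y → ∃ T ∈ AlgL L, T x = y) ∧
      IsClosed (orbit L x) :=
  stmt7_general L hL x P hPproj hPrange n A hatoms hdom hgen hmin
end
end

section
/- Let L be a CSL on H and x ∈ H. If the projection P onto [Alg L · x] is not hyperatomic (so there is a strictly increasing sequence F₁ < F₂ < ⋯ in L with ⋁Fₙ = P), then there exists y ∈ PH such that y ≠ Tx for every T ∈ Alg L; in particular {Alg L · x} is not closed. -/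
noncomputable section

open scoped InnerProductSpace

variable {H : Type*} [NormedAddCommGroup H] [InnerProductSpace ℂ H] [CompleteSpace H]

/-! An operator `T ∈ Alg L` leaves every `Fₖ H` invariant, so
`‖(1 - Fₖ) T x‖ ≤ ‖T‖ ‖(1 - Fₖ) x‖`. No `Fₖ` fixes `x` (otherwise `P ≤ Fₖ < Fₖ₊₁ ≤ P`),
so `bₖ = ‖(1 - Fₖ) x‖` is positive and tends to `0`. Choosing `k₀ < k₁ < ⋯` with `b_{kₙ}`
summably small and unit vectors `eₙ ∈ (F_{kₙ+1} - F_{kₙ}) H`, the vector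
`y = ∑ (n + 1) b_{kₙ} eₙ` lies in `P H` and satisfies `‖(1 - F_{kₙ}) y‖ ≥ (n + 1) b_{kₙ}`,
which no bounded `T` with `T x = y` allows. -/

open Filter Topology

namespace IsStarProjection

variable {p q : H →L[ℂ] H}

lemma apply_apply (hp : IsStarProjection p) (z : H) : p (p z) = p z := by
  rw [← mul_apply_eq_comp, hp.isIdempotentElem.eq]

lemma norm_apply_le (hp : IsStarProjection p) (z : H) : ‖p z‖ ≤ ‖z‖ := by
  simpa using p.le_of_opNorm_le (hp.norm_le p) z

lemma apply_eq_self_of_le (hp : IsStarProjection p) (hq : IsStarProjection q) (h : p ≤ q)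
    {z : H} (hz : p z = z) : q z = z := by
  rw [← hz, ← mul_apply_eq_comp, (hp.le_iff_mul_eq_right hq).1 h]

lemma apply_eq_zero_of_le (hp : IsStarProjection p) (hq : IsStarProjection q) (h : p ≤ q)
    {z : H} (hz : q z = 0) : p z = 0 := by
  rw [← (hp.le_iff_mul_eq_left hq).1 h, mul_apply_eq_comp, hz, map_zero]

lemma exists_norm_eq_one_of_lt (hp : IsStarProjection p) (hq : IsStarProjection q) (h : p < q) :
    ∃ e : H, ‖e‖ = 1 ∧ q e = e ∧ p e = 0 := by
  obtain ⟨w, hw⟩ : ∃ w, (q - p) w ≠ 0 := by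
    by_contra! hw
    exact h.ne (sub_eq_zero.1 (ContinuousLinearMap.ext hw)).symm
  have hqp : q * p = p := (hp.le_iff_mul_eq_right hq).1 h.le
  have hpq : p * q = p := (hp.le_iff_mul_eq_left hq).1 h.le
  refine ⟨(‖(q - p) w‖⁻¹ : ℂ) • (q - p) w, norm_smul_inv_norm hw, ?_, ?_⟩
  · rw [map_smul, ← mul_apply_eq_comp, mul_sub, hq.isIdempotentElem.eq, hqp]
  · rw [map_smul, ← mul_apply_eq_comp, mul_sub, hp.isIdempotentElem.eq, hpq, sub_self,
      zero_apply, smul_zero]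

end IsStarProjection

lemma IsOrthProj.isStarProjection {P : H →L[ℂ] H} (hP : IsOrthProj P) : IsStarProjection P :=
  ⟨hP.2, hP.1⟩

lemma norm_one_sub_apply_le_of_invariant {Q T : H →L[ℂ] H} (hQ : IsStarProjection Q)
    (hT : (1 - Q) * (T * Q) = 0) (x : H) : ‖(1 - Q) (T x)‖ ≤ ‖T‖ * ‖(1 - Q) x‖ := by
  have h : (1 - Q) * T = (1 - Q) * (T * (1 - Q)) := by
    rw [mul_sub T, mul_one, mul_sub, hT, sub_zero]
  calc ‖(1 - Q) (T x)‖ = ‖(1 - Q) (T ((1 - Q) x))‖ := by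
        rw [← mul_apply_eq_comp, h]; rfl
    _ ≤ ‖T ((1 - Q) x)‖ := hQ.one_sub.norm_apply_le _
    _ ≤ ‖T‖ * ‖(1 - Q) x‖ := T.le_opNorm _

lemma one_mem_algL {L : Set (H →L[ℂ] H)} (hL : ∀ Q ∈ L, IsStarProjection Q) :
    (1 : H →L[ℂ] H) ∈ AlgL L := fun Q hQ =>
  (hL Q hQ).one_sub_mul_self

lemma apply_mem_orbit_eq_self {E : Type*} [NormedAddCommGroup E] [InnerProductSpace ℂ E]
    {L : Set (E →L[ℂ] E)} {x : E} {Q : E →L[ℂ] E} (hQL : Q ∈ L) (hx : Q x = x) :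
    ∀ y ∈ orbit L x, Q y = y := by
  rintro _ ⟨T, hT, rfl⟩
  have h : (1 - Q) (T (Q x)) = 0 := congr($(hT Q hQL) x)
  rw [hx, sub_apply, one_apply_eq_self, sub_eq_zero] at h
  exact h.symm

lemma le_of_apply_eq_self {L : Set (H →L[ℂ] H)} {x : H} {P Q : H →L[ℂ] H}
    (hP : IsStarProjection P)
    (hPrange : (LinearMap.range (P : H →ₗ[ℂ] H) : Set H) = closure (orbit L x))
    (hQL : Q ∈ L) (hQ : IsStarProjection Q) (hx : Q x = x) : P ≤ Q := by
  rw [hP.le_iff_mul_eq_right hQ]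
  ext z
  have hz : P z ∈ closure (orbit L x) := hPrange ▸ ⟨z, rfl⟩
  exact closure_minimal (apply_mem_orbit_eq_self hQL hx) (isClosed_eq Q.continuous continuous_id) hz

lemma apply_eq_self_of_mem_closure_orbit {L : Set (H →L[ℂ] H)} {x : H} {P : H →L[ℂ] H}
    (hP : IsStarProjection P)
    (hPrange : (LinearMap.range (P : H →ₗ[ℂ] H) : Set H) = closure (orbit L x)) {y : H}
    (hy : y ∈ closure (orbit L x)) : P y = y := by
  obtain ⟨z, rfl⟩ : y ∈ (LinearMap.range (P : H →ₗ[ℂ] H) : Set H) := hPrange ▸ hy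
  exact hP.apply_apply z

lemma apply_ne_self_of_lt {L : Set (H →L[ℂ] H)} {x : H} {P Q R : H →L[ℂ] H}
    (hP : IsStarProjection P)
    (hPrange : (LinearMap.range (P : H →ₗ[ℂ] H) : Set H) = closure (orbit L x))
    (hQL : Q ∈ L) (hQ : IsStarProjection Q) (hQR : Q < R) (hRP : R ≤ P) : Q x ≠ x := fun hx =>
  hQR.not_ge (hRP.trans (le_of_apply_eq_self hP hPrange hQL hQ hx))

section Chain

variable {F : ℕ → H →L[ℂ] H}

lemma le_of_tendsto_apply (hF : ∀ n, IsStarProjection (F n)) (hmono : Monotone F)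
    {P : H →L[ℂ] H} (hP : IsStarProjection P)
    (hlim : ∀ z, Tendsto (fun n => F n z) atTop (𝓝 (P z))) (m : ℕ) : F m ≤ P := by
  rw [(hF m).le_iff_mul_eq_right hP]
  ext z
  refine tendsto_nhds_unique (hlim (F m z)) (tendsto_const_nhds.congr' ?_)
  filter_upwards [eventually_ge_atTop m] with n hn
  exact ((hF m).apply_eq_self_of_le (hF n) (hmono hn) ((hF m).apply_apply z)).symm

lemma apply_one_sub_tsum (hF : ∀ n, IsStarProjection (F n)) (hmono : Monotone F)
    {k : ℕ → ℕ} (hk : StrictMono k) {u : ℕ → H} (hu_top : ∀ n, F (k n + 1) (u n) = u n)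
    (hu_bot : ∀ n, F (k n) (u n) = 0) (hu : Summable u) (n : ℕ) :
    F (k n + 1) ((1 - F (k n)) (∑' m, u m)) = u n := by
  rw [← mul_apply_eq_comp, ContinuousLinearMap.map_tsum _ hu, tsum_eq_single n]
  · simp [mul_apply_eq_comp, hu_bot, hu_top]
  intro m hmn
  rcases hmn.lt_or_gt with h | h
  · have : F (k n) (u m) = u m :=
      (hF _).apply_eq_self_of_le (hF _) (hmono (Nat.succ_le_of_lt (hk h))) (hu_top m)
    simp [mul_apply_eq_comp, this]
  · have h1 : F (k n + 1) (u m) = 0 :=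
      (hF _).apply_eq_zero_of_le (hF _) (hmono (Nat.succ_le_of_lt (hk h))) (hu_bot m)
    have h2 : F (k n) (u m) = 0 := (hF _).apply_eq_zero_of_le (hF _) (hmono (hk h).le) (hu_bot m)
    simp [mul_apply_eq_comp, h1, h2]

theorem exists_norm_one_sub_apply_unbounded (hF : ∀ n, IsStarProjection (F n))
    (hF_strict : StrictMono F) {P : H →L[ℂ] H} (hP : IsStarProjection P)
    (hFP : ∀ n, F n ≤ P) {b : ℕ → ℝ} (hb_pos : ∀ k, 0 < b k)
    (hb : Tendsto b atTop (𝓝 0)) :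
    ∃ y, P y = y ∧ ∀ C : ℝ, ∃ k, C * b k < ‖(1 - F k) y‖ := by
  obtain ⟨φ, hφ, hφb⟩ := extraction_forall_of_eventually
    (P := fun n k => b k < (1 / 2) ^ n / (n + 1)) fun n => hb.eventually_lt_const (by positivity)
  choose e he_norm he_top he_bot using fun k =>
    (hF k).exists_norm_eq_one_of_lt (hF (k + 1)) (hF_strict k.lt_succ_self)
  set c : ℕ → ℝ := fun n => (n + 1) * b (φ n)
  set u : ℕ → H := fun n => (c n : ℂ) • e (φ n)
  have hu_norm (n : ℕ) : ‖u n‖ = c n := by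
    rw [norm_smul, he_norm, mul_one, Complex.norm_real,
      Real.norm_of_nonneg (mul_pos (by positivity) (hb_pos _)).le]
  have hu : Summable u := Summable.of_norm_bounded summable_geometric_two fun n => by
    rw [hu_norm]
    exact ((lt_div_iff₀' (by positivity)).1 (hφb n)).le
  have hu_top (n : ℕ) : F (φ n + 1) (u n) = u n := by simp [u, he_top]
  have hband := apply_one_sub_tsum hF hF_strict.monotone hφ hu_top
    (fun n => by simp [u, he_bot]) hu
  refine ⟨∑' n, u n, ?_, fun C => ?_⟩
  · rw [P.map_tsum hu]
    exact tsum_congr fun n => (hF _).apply_eq_self_of_le hP (hFP _) (hu_top n)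
  · obtain ⟨n, hn⟩ := exists_nat_gt C
    refine ⟨φ n, ?_⟩
    calc C * b (φ n) < c n := mul_lt_mul_of_pos_right (hn.trans (lt_add_one _)) (hb_pos _)
      _ = ‖F (φ n + 1) ((1 - F (φ n)) (∑' n, u n))‖ := by rw [hband, hu_norm]
      _ ≤ ‖(1 - F (φ n)) (∑' n, u n)‖ := (hF _).norm_apply_le _

end Chain

/-- if the projection `P` onto `[Alg L · x]` is not hyperatomic, witnessed by
a strictly increasing sequence `F₁ < F₂ < ⋯` in `L` with `⋁ Fₙ = P`, then some `y ∈ PH` is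
not of the form `T x` for any `T ∈ Alg L`; in particular `{Alg L · x}` is not closed. -/
theorem stmt8 (L : Set (H →L[ℂ] H)) (hL : IsCSL L) (x : H)
    (P : H →L[ℂ] H) (hPproj : IsOrthProj P)
    (hPrange : (LinearMap.range (P : H →ₗ[ℂ] H) : Set H) = closure (orbit L x))
    (F : ℕ → H →L[ℂ] H) (hFL : ∀ n, F n ∈ L)
    (hmono : ∀ n, pLE (F n) (F (n + 1)) ∧ F n ≠ F (n + 1))
    (hsup : ∀ z : H, Filter.Tendsto (fun n => F n z) Filter.atTop (nhds (P z))) :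
    (∃ y : H, P y = y ∧ ∀ T ∈ AlgL L, T x ≠ y) ∧ ¬ IsClosed (orbit L x) := by
  have hLproj (Q : H →L[ℂ] H) (hQ : Q ∈ L) : IsStarProjection Q :=
    (hL.1 Q hQ).isStarProjection
  have hF (n : ℕ) := hLproj _ (hFL n)
  have hP := hPproj.isStarProjection
  have hF_strict : StrictMono F := strictMono_nat_of_lt_succ fun n =>
    (((hF n).le_iff_mul_eq_right (hF _)).2 (hmono n).1).lt_of_ne (hmono n).2
  have hFP := le_of_tendsto_apply hF hF_strict.monotone hP hsup
  have hxP : P x = x := apply_eq_self_of_mem_closure_orbit hP hPrange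
    (subset_closure ⟨1, one_mem_algL hLproj, rfl⟩)
  have hFx (k : ℕ) : 0 < ‖(1 - F k) x‖ := by
    rw [norm_pos_iff, sub_apply, one_apply_eq_self, sub_ne_zero]
    exact (apply_ne_self_of_lt hP hPrange (hFL k) (hF k) (hF_strict k.lt_succ_self) (hFP _)).symm
  have hlim : Tendsto (fun k => ‖(1 - F k) x‖) atTop (𝓝 0) := by
    simpa [hxP] using (tendsto_const_nhds (x := x)).sub (hsup x) |>.norm
  obtain ⟨y, hPy, hy⟩ := exists_norm_one_sub_apply_unbounded hF hF_strict hP hFP hFx hlim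
  have hy_orbit : y ∉ orbit L x := by
    rintro ⟨T, hT, rfl⟩
    obtain ⟨k, hk⟩ := hy ‖T‖
    exact hk.not_ge (norm_one_sub_apply_le_of_invariant (hF k) (hT _ (hFL k)) x)
  have hy_closure : y ∈ closure (orbit L x) := hPrange ▸ ⟨y, hPy⟩
  exact ⟨⟨y, hPy, fun T hT hTy => hy_orbit ⟨T, hT, hTy⟩⟩,
    fun hcl => hy_orbit (hcl.closure_subset hy_closure)⟩
end
end
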